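/- Let A be a finite-dimensional algebra, M a generator-cogenerator, Λ = End_A(M), and X an A-module admitting a minimal add M-approximating sequence 0 → M₁ → M₀ → X → 0. Then the Λ-module Hom_A(M, X) has projective dimension at most 2 over Λ. -/

import Mathlib

open CategoryTheory

universe u

section Defs
variable (A : Type u) [Ring A]

/-- `N` lies in `add M`: it is a direct summand of a finite direct sum of copies of `M`. -/
def MemAdd (M N : ModuleCat.{u} A) : Prop :=
  ∃ (n : ℕ) (i : N ⟶ ModuleCat.of A (Fin n → M)) (p : ModuleCat.of A (Fin n → M) ⟶ N),
    i ≫ p = 𝟙 N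

/-- `0 → M₁ →f M₀ →g X → 0` is a short exact sequence of `A`-modules. -/
def IsSES {M₁ M₀ X : ModuleCat.{u} A} (f : M₁ ⟶ M₀) (g : M₀ ⟶ X) : Prop :=
  Function.Injective f ∧ Function.Surjective g ∧ LinearMap.range f.hom = LinearMap.ker g.hom

/-- `g : M₀ → X` is a right `add M`-approximation of `X`. -/
def IsRightApprox (M : ModuleCat.{u} A) {M₀ X : ModuleCat.{u} A} (g : M₀ ⟶ X) : Prop :=
  MemAdd A M M₀ ∧ ∀ (N : ModuleCat.{u} A) (f : N ⟶ X), MemAdd A M N → ∃ q : N ⟶ M₀, q ≫ g = f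

/-- `g` is right minimal. -/
def IsRightMinimal {M₀ X : ModuleCat.{u} A} (g : M₀ ⟶ X) : Prop :=
  ∀ h : M₀ ⟶ M₀, h ≫ g = g → IsIso h

/-- `0 → M₁ → M₀ → X → 0` is an `add M`-approximating sequence for `X`. -/
def IsApproxSeq (M : ModuleCat.{u} A) {M₁ M₀ X : ModuleCat.{u} A}
    (f : M₁ ⟶ M₀) (g : M₀ ⟶ X) : Prop :=
  MemAdd A M M₁ ∧ IsSES A f g ∧ IsRightApprox A M g

/-- minimal `add M`-approximating sequence. -/
def IsMinApproxSeq (M : ModuleCat.{u} A) {M₁ M₀ X : ModuleCat.{u} A}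
    (f : M₁ ⟶ M₀) (g : M₀ ⟶ X) : Prop :=
  IsApproxSeq A M f g ∧ IsRightMinimal A g

def HasApproxSeq (M X : ModuleCat.{u} A) : Prop :=
  ∃ (M₁ M₀ : ModuleCat.{u} A) (f : M₁ ⟶ M₀) (g : M₀ ⟶ X), IsApproxSeq A M f g

/-- projective dimension at most `n`. -/
def PdLE : ℕ → ModuleCat.{u} A → Prop
  | 0, X => Projective X
  | n+1, X => Projective X ∨ ∃ (K P : ModuleCat.{u} A) (f : K ⟶ P) (g : P ⟶ X),
      Projective P ∧ IsSES A f g ∧ PdLE n K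

/-- global dimension at most `n` (on finitely generated modules). -/
def GlobalDimLE (n : ℕ) : Prop := ∀ X : ModuleCat.{u} A, Module.Finite A X → PdLE A n X

/-- `M` is a generator-cogenerator of `mod A`. -/
def IsGenCogen (M : ModuleCat.{u} A) : Prop :=
  MemAdd A M (ModuleCat.of A A) ∧
    ∀ N : ModuleCat.{u} A, Module.Finite A N → Injective N → MemAdd A M N

/-- representation dimension at most `n`. -/
def RepDimLE (n : ℕ) : Prop :=
  ∃ M : ModuleCat.{u} A, Module.Finite A M ∧ IsGenCogen A M ∧
    GlobalDimLE (Module.End A M) n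

/-- representation dimension equal to `n`. -/
def RepDimEq (n : ℕ) : Prop := RepDimLE A n ∧ ∀ m : ℕ, m < n → ¬ RepDimLE A m

/-- indecomposable module -/
def Indec (X : ModuleCat.{u} A) : Prop :=
  (∃ x : X, x ≠ 0) ∧ ∀ e : X ⟶ X, e ≫ e = e → e = 0 ∨ e = 𝟙 X

/-- representation-finite -/
def RepFinite : Prop :=
  ∃ (n : ℕ) (f : Fin n → ModuleCat.{u} A),
    ∀ X : ModuleCat.{u} A, Module.Finite A X → Indec A X → ∃ i, Nonempty (X ≅ f i)
end Defs


section HomEnd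
variable (A : Type u) [Ring A] (M : ModuleCat.{u} A)

/-- `Hom_A(M, X)` as a module over `Λ = End_A(M)ᵒᵖ`, acting by precomposition. -/
noncomputable instance homEndModule (X : ModuleCat.{u} A) :
    Module (Module.End A M)ᵐᵒᵖ (M →ₗ[A] X) where
  smul e f := f ∘ₗ e.unop
  one_smul f := by ext x; rfl
  mul_smul e₁ e₂ f := by ext x; rfl
  smul_zero e := rfl
  smul_add e f g := rfl
  add_smul e₁ e₂ f := by ext x; change f (e₁.unop x + e₂.unop x) = _; rw [map_add]; rfl
  zero_smul f := by ext x; change f 0 = 0; rw [map_zero]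

/-- The `Λ`-linear map `Hom_A(M, X) → Hom_A(M, Y)` induced by `g : X → Y`. -/
noncomputable def homPush {X Y : ModuleCat.{u} A} (g : X ⟶ Y) :
    (M →ₗ[A] X) →ₗ[(Module.End A M)ᵐᵒᵖ] (M →ₗ[A] Y) where
  toFun f := (g.hom : X →ₗ[A] Y) ∘ₗ f
  map_add' f₁ f₂ := by ext x; simp
  map_smul' e f := rfl

end HomEnd

/-!
Applying `Hom_A(M, -)` to the approximating sequence `0 → M₁ → M₀ → X → 0` gives a short exact
sequence `0 → Hom(M, M₁) → Hom(M, M₀) → Hom(M, X) → 0` of `Λ`-modules: left exactness is that of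
`Hom`, and surjectivity on the right is the approximation property tested on `M ∈ add M`. For
`N ∈ add M`, `Hom(M, N)` is a direct summand of `Hom(M, Mⁿ) ≅ Λⁿ`, hence projective. So
`Hom(M, X)` even has projective dimension at most `1`.
-/

section HomModule

variable (A : Type u) [Ring A] (M : ModuleCat.{u} A)

-- Instance search sees `ModuleCat.of A (Fin n → M)` through to `Fin n → M`, missing `homEndModule`.
noncomputable instance homEndModulePi (n : ℕ) :
    Module (Module.End A M)ᵐᵒᵖ (M →ₗ[A] ModuleCat.of A (Fin n → M)) :=
  homEndModule A M (ModuleCat.of A (Fin n → M))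

noncomputable def homPiEquiv (n : ℕ) :
    (M →ₗ[A] ModuleCat.of A (Fin n → M)) ≃ₗ[(Module.End A M)ᵐᵒᵖ]
      (Fin n → (Module.End A M)ᵐᵒᵖ) where
  toFun f j := MulOpposite.op (LinearMap.proj j ∘ₗ f)
  map_add' f₁ f₂ := by ext j; simp [LinearMap.comp_add]
  map_smul' e f := rfl
  invFun g := LinearMap.pi fun j => (g j).unop
  left_inv f := rfl
  right_inv g := rfl

theorem projective_homModule_of_memAdd {N : ModuleCat.{u} A} (hN : MemAdd A M N) :
    Projective (ModuleCat.of (Module.End A M)ᵐᵒᵖ (M →ₗ[A] N)) := by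
  obtain ⟨n, i, p, hip⟩ := hN
  rw [← IsProjective.iff_projective]
  have := Module.Projective.of_equiv (homPiEquiv A M n).symm
  refine Module.Projective.of_split (homPush A M i) (homPush A M p) ?_
  ext φ x
  exact LinearMap.congr_fun (congrArg ModuleCat.Hom.hom hip) (φ x)

theorem memAdd_self : MemAdd A M M :=
  ⟨1, ModuleCat.ofHom (LinearMap.pi fun _ => LinearMap.id), ModuleCat.ofHom (LinearMap.proj 0),
    rfl⟩

variable {A M}

theorem homPush_injective {Y Z : ModuleCat.{u} A} {f : Y ⟶ Z} (hf : Function.Injective f) :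
    Function.Injective (homPush A M f) :=
  fun _ _ h => LinearMap.ext fun x => hf (LinearMap.congr_fun h x)

theorem homPush_surjective_of_isRightApprox {M₀ X : ModuleCat.{u} A} {g : M₀ ⟶ X}
    (hg : IsRightApprox A M g) : Function.Surjective (homPush A M g) := by
  intro φ
  obtain ⟨q, hq⟩ := hg.2 M (ModuleCat.ofHom φ) (memAdd_self A M)
  exact ⟨q.hom, congrArg ModuleCat.Hom.hom hq⟩

theorem range_homPush_eq_ker {M₁ M₀ X : ModuleCat.{u} A} {f : M₁ ⟶ M₀} {g : M₀ ⟶ X}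
    (hf : Function.Injective f) (hfg : LinearMap.range f.hom = LinearMap.ker g.hom) :
    LinearMap.range (homPush A M f) = LinearMap.ker (homPush A M g) := by
  apply le_antisymm
  · rintro _ ⟨ψ, rfl⟩
    refine LinearMap.ext fun x => ?_
    exact (hfg ▸ LinearMap.mem_range_self f.hom (ψ x) : f (ψ x) ∈ LinearMap.ker g.hom)
  · intro φ hφ
    have hmem : ∀ x, φ x ∈ LinearMap.range f.hom := fun x => hfg ▸ LinearMap.congr_fun hφ x
    refine ⟨(LinearEquiv.ofInjective f.hom hf).symm.toLinearMap ∘ₗ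
      LinearMap.codRestrict _ φ hmem, LinearMap.ext fun x => ?_⟩
    exact congrArg Subtype.val ((LinearEquiv.ofInjective f.hom hf).apply_symm_apply ⟨φ x, hmem x⟩)

theorem isSES_homPush_of_isApproxSeq {M₁ M₀ X : ModuleCat.{u} A} {f : M₁ ⟶ M₀} {g : M₀ ⟶ X}
    (h : IsApproxSeq A M f g) :
    IsSES (Module.End A M)ᵐᵒᵖ (ModuleCat.ofHom (homPush A M f))
      (ModuleCat.ofHom (homPush A M g)) :=
  let ⟨_, ⟨hf, _, hfg⟩, hg⟩ := h
  ⟨homPush_injective hf, homPush_surjective_of_isRightApprox hg, range_homPush_eq_ker hf hfg⟩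

end HomModule

theorem pdLE_of_projective {R : Type u} [Ring R] {X : ModuleCat.{u} R} (hX : Projective X) :
    ∀ n, PdLE R n X
  | 0 => hX
  | _ + 1 => Or.inl hX

theorem pdLE_succ_homModule_of_isApproxSeq {A : Type u} [Ring A] {M M₁ M₀ X : ModuleCat.{u} A}
    {f : M₁ ⟶ M₀} {g : M₀ ⟶ X} (h : IsApproxSeq A M f g) (n : ℕ) :
    PdLE (Module.End A M)ᵐᵒᵖ (n + 1) (ModuleCat.of (Module.End A M)ᵐᵒᵖ (M →ₗ[A] X)) :=
  Or.inr ⟨_, _, _, _, projective_homModule_of_memAdd A M h.2.2.1, isSES_homPush_of_isApproxSeq h,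
    pdLE_of_projective (projective_homModule_of_memAdd A M h.1) n⟩

theorem stmt13_general (A : Type u) [Ring A] (M : ModuleCat.{u} A)
    {M₁ M₀ X : ModuleCat.{u} A} (f : M₁ ⟶ M₀) (g : M₀ ⟶ X)
    (h : IsMinApproxSeq A M f g) :
    PdLE (Module.End A M)ᵐᵒᵖ 2 (ModuleCat.of (Module.End A M)ᵐᵒᵖ (M →ₗ[A] X)) :=
  pdLE_succ_homModule_of_isApproxSeq h.1 1

/-- If `M` is a generator-cogenerator and `X` admits a minimal
`add M`-approximating sequence, then the `End_A(M)ᵒᵖ`-module `Hom_A(M, X)` has projective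
dimension at most `2`. -/
theorem stmt13 {k : Type u} [Field k] (A : Type u) [Ring A] [Algebra k A]
    [FiniteDimensional k A] (M : ModuleCat.{u} A) [Module.Finite A M]
    (hM : IsGenCogen A M)
    {M₁ M₀ X : ModuleCat.{u} A} (f : M₁ ⟶ M₀) (g : M₀ ⟶ X)
    (h : IsMinApproxSeq A M f g) :
    PdLE (Module.End A M)ᵐᵒᵖ 2 (ModuleCat.of (Module.End A M)ᵐᵒᵖ (M →ₗ[A] X)) :=
  stmt13_general A M f g h
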